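/- Let Q(f) be a family of Hermitian positive semidefinite M×M matrices indexed by f in a measurable set ℬ, with measurable eigenvalues, rank r(f) ≤ r_Q(f) for a measurable bound r_Q, and total power P = ∫_ℬ tr Q(f) df. Then ∫_ℬ log det(I + Q(f)/N₀) df ≤ ∑_{m=1}^M B_m log(1 + P/(N₀ ∑_{i=1}^M B_i)), where B_m = μ({f ∈ ℬ : r_Q(f) ≥ m}). -/

import Mathlib

/-!
Diagonalising, `log det (I + Q/N₀) = ∑ log (1 + λᵢ/N₀)` where at most `r_Q` of the eigenvalues
`λᵢ ≥ 0` are nonzero. The tangent line of the concave logarithm at `c > 0`,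
`log y ≤ log c + y/c - 1`, bounds this by `r_Q (log c + 1/c - 1) + tr Q / (N₀ c)`. Integrating
over `ℬ`, the layer-cake formula gives `∫ r_Q = ∑ B_m`, the trace integrates to `P`, and the
choice `c = 1 + P / (N₀ ∑ B_m)` turns the bound into `∑ B_m log c`.
-/

open Matrix Complex ComplexOrder MeasureTheory

theorem Real.log_le_log_add_div_sub_one {y c : ℝ} (hy : 0 < y) (hc : 0 < c) :
    Real.log y ≤ Real.log c + y / c - 1 := by
  have := Real.log_le_sub_one_of_pos (div_pos hy hc)
  rw [Real.log_div hy.ne' hc.ne'] at this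
  linarith

namespace Matrix

theorem eq_zero_of_rank_eq_zero {m n R : Type*} [Fintype n] [Field R] {A : Matrix m n R}
    (h : A.rank = 0) : A = 0 := by
  classical
  rw [rank, Submodule.finrank_eq_zero, LinearMap.range_eq_bot] at h
  exact toLin'.injective (by rw [toLin'_apply', h, map_zero])

variable {𝕜 : Type*} [RCLike 𝕜] {n : Type*} [Fintype n] [DecidableEq n] {A : Matrix n n 𝕜}

theorem IsHermitian.det_one_add_smul (hA : A.IsHermitian) (t : ℝ) :
    (1 + (t : 𝕜) • A).det = ∏ i, ((1 + t * hA.eigenvalues i : ℝ) : 𝕜) := by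
  set U := hA.eigenvectorUnitary
  have hU : (U : Matrix n n 𝕜) * star (U : Matrix n n 𝕜) = 1 := mem_unitaryGroup_iff.mp U.2
  have hconj : 1 + (t : 𝕜) • A = (U : Matrix n n 𝕜) *
      diagonal (fun i => ((1 + t * hA.eigenvalues i : ℝ) : 𝕜)) * star (U : Matrix n n 𝕜) := by
    have : diagonal (fun i => ((1 + t * hA.eigenvalues i : ℝ) : 𝕜)) =
        1 + (t : 𝕜) • diagonal (RCLike.ofReal ∘ hA.eigenvalues) := by
      rw [← diagonal_one, ← diagonal_smul, diagonal_add]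
      congr with i
      simp
    rw [this, Matrix.mul_add, Matrix.add_mul, Matrix.mul_one, hU, Matrix.mul_smul,
      Matrix.smul_mul, ← Unitary.conjStarAlgAut_apply (S := 𝕜), ← hA.spectral_theorem]
  rw [hconj, det_mul_right_comm, hU, Matrix.one_mul, det_diagonal]

theorem IsHermitian.rank_eq_card_filter_eigenvalues_ne_zero (hA : A.IsHermitian) :
    A.rank = (Finset.univ.filter fun i => hA.eigenvalues i ≠ 0).card := by
  rw [hA.rank_eq_card_non_zero_eigs, Fintype.card_subtype]

theorem PosSemidef.log_re_det_one_add_smul_le (hA : A.PosSemidef) {t c : ℝ} (ht : 0 ≤ t)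
    (hc : 0 < c) :
    Real.log (RCLike.re (1 + (t : 𝕜) • A).det) ≤
      A.rank * (Real.log c + c⁻¹ - 1) + t * RCLike.re A.trace / c := by
  set ev := hA.isHermitian.eigenvalues
  have hpos : ∀ i, 0 < 1 + t * ev i := fun i => by
    have := mul_nonneg ht (hA.eigenvalues_nonneg i)
    linarith
  -- a zero eigenvalue contributes `log 1 = 0`, so the constant is paid only `rank A` times
  have hterm : ∀ i, Real.log (1 + t * ev i) ≤
      (if ev i ≠ 0 then Real.log c + c⁻¹ - 1 else 0) + t * ev i / c := by
    intro i
    split_ifs with hi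
    · have := Real.log_le_log_add_div_sub_one (hpos i) hc
      rw [add_div, one_div] at this
      linarith
    · simp [not_not.mp hi]
  have htr : RCLike.re A.trace = ∑ i, ev i := by
    simp [hA.isHermitian.trace_eq_sum_eigenvalues, ev]
  rw [hA.isHermitian.det_one_add_smul, ← RCLike.ofReal_prod, RCLike.ofReal_re,
    Real.log_prod fun i _ => (hpos i).ne', hA.isHermitian.rank_eq_card_filter_eigenvalues_ne_zero,
    htr, Finset.mul_sum, Finset.sum_div]
  calc ∑ i, Real.log (1 + t * ev i)
      ≤ ∑ i, ((if ev i ≠ 0 then Real.log c + c⁻¹ - 1 else 0) + t * ev i / c) :=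
        Finset.sum_le_sum fun i _ => hterm i
    _ = _ := by
        rw [Finset.sum_add_distrib, Finset.sum_ite, Finset.sum_const, Finset.sum_const_zero,
          nsmul_eq_mul, add_zero]

end Matrix

namespace MeasureTheory

variable {α : Type*} [MeasurableSpace α] {μ : Measure α} {s : Set α}

theorem setIntegral_natCast_eq_sum_measure_setOf_le {r : α → ℕ} (hr : Measurable r) {M : ℕ}
    (hrM : ∀ x, r x ≤ M) (hs : μ s < ⊤) :
    ∫ x in s, (r x : ℝ) ∂μ = ∑ m ∈ Finset.Icc 1 M, (μ {x ∈ s | m ≤ r x}).toReal := by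
  have hmeas : ∀ m, MeasurableSet {x | m ≤ r x} := fun m => hr measurableSet_Ici
  have hlayer : ∀ x, (r x : ℝ) = ∑ m ∈ Finset.Icc 1 M, {x | m ≤ r x}.indicator 1 x := fun x => by
    have hIcc : {m ∈ Finset.Icc 1 M | m ≤ r x} = Finset.Icc 1 (r x) := by
      ext m
      simp only [Finset.mem_filter, Finset.mem_Icc]
      have := hrM x
      omega
    simp [Set.indicator_apply, Finset.sum_boole, hIcc]
  calc ∫ x in s, (r x : ℝ) ∂μ
      = ∫ x in s, ∑ m ∈ Finset.Icc 1 M, {x | m ≤ r x}.indicator 1 x ∂μ := by simp_rw [← hlayer]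
    _ = ∑ m ∈ Finset.Icc 1 M, ∫ x in s, {x | m ≤ r x}.indicator 1 x ∂μ :=
        integral_finsetSum _ fun m _ => (integrableOn_const hs.ne).indicator (hmeas m)
    _ = _ := Finset.sum_congr rfl fun m _ => by
        rw [integral_indicator_one (hmeas m), measureReal_restrict_apply (hmeas m), Set.inter_comm]
        rfl

theorem IntegrableOn.natCast_of_bounded {r : α → ℕ} (hr : Measurable r) {M : ℕ}
    (hrM : ∀ x, r x ≤ M) (hs : μ s < ⊤) : IntegrableOn (fun x => (r x : ℝ)) s μ :=
  Measure.integrableOn_of_bounded hs.ne (measurable_from_nat.comp hr).aestronglyMeasurable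
    (M := M) (ae_of_all _ fun x => by simpa using hrM x)

theorem setIntegral_re_trace_eq_zero_of_setIntegral_rank_bound_eq_zero {𝕜 n : Type*} [RCLike 𝕜]
    [Fintype n] {Q : α → Matrix n n 𝕜} {r : α → ℕ} (hs : MeasurableSet s)
    (hrank : ∀ x ∈ s, (Q x).rank ≤ r x) (hr : IntegrableOn (fun x => (r x : ℝ)) s μ)
    (h0 : ∫ x in s, (r x : ℝ) ∂μ = 0) : ∫ x in s, RCLike.re (Q x).trace ∂μ = 0 := by
  have hr0 : (fun x => (r x : ℝ)) =ᵐ[μ.restrict s] 0 :=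
    (integral_eq_zero_iff_of_nonneg (fun x => Nat.cast_nonneg _) hr).mp h0
  refine integral_eq_zero_of_ae ?_
  filter_upwards [hr0, ae_restrict_mem hs] with x hx hxs
  have hrank0 : (Q x).rank = 0 := by
    have := hrank x hxs
    simp only [Pi.zero_apply, Nat.cast_eq_zero] at hx
    omega
  simp [eq_zero_of_rank_eq_zero hrank0]

theorem setIntegral_re_trace_nonneg {𝕜 n : Type*} [RCLike 𝕜] [Fintype n]
    {Q : α → Matrix n n 𝕜} (hs : MeasurableSet s) (hQ : ∀ x ∈ s, (Q x).PosSemidef) :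
    0 ≤ ∫ x in s, RCLike.re (Q x).trace ∂μ :=
  setIntegral_nonneg hs fun x hx => (RCLike.nonneg_iff.mp (hQ x hx).trace_nonneg).1

theorem setIntegral_log_re_det_one_add_smul_le {𝕜 n : Type*} [RCLike 𝕜] [Fintype n]
    [DecidableEq n] {Q : α → Matrix n n 𝕜} {r : α → ℕ} (hs : MeasurableSet s)
    (hQ : ∀ x ∈ s, (Q x).PosSemidef) (hrank : ∀ x ∈ s, (Q x).rank ≤ r x)
    (hr : IntegrableOn (fun x => (r x : ℝ)) s μ)
    (htr : IntegrableOn (fun x => RCLike.re (Q x).trace) s μ) {t c : ℝ} (ht : 0 ≤ t)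
    (hc : 0 < c) :
    ∫ x in s, Real.log (RCLike.re (1 + (t : 𝕜) • Q x).det) ∂μ ≤
      (∫ x in s, (r x : ℝ) ∂μ) * (Real.log c + c⁻¹ - 1) +
        t * (∫ x in s, RCLike.re (Q x).trace ∂μ) / c := by
  have hK : 0 ≤ Real.log c + c⁻¹ - 1 := by
    linarith [Real.one_sub_inv_le_log_of_pos hc]
  have hbound_int := (hr.mul_const (Real.log c + c⁻¹ - 1)).add ((htr.const_mul t).div_const c)
  by_cases hint : IntegrableOn (fun x => Real.log (RCLike.re (1 + (t : 𝕜) • Q x).det)) s μ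
  · calc _ ≤ ∫ x in s, ((r x : ℝ) * (Real.log c + c⁻¹ - 1) + t * RCLike.re (Q x).trace / c) ∂μ :=
          setIntegral_mono_on hint hbound_int hs fun x hx =>
            ((hQ x hx).log_re_det_one_add_smul_le ht hc).trans <| add_le_add_left
              (mul_le_mul_of_nonneg_right (by exact_mod_cast hrank x hx) hK) _
      _ = _ := by
          rw [integral_add (hr.mul_const _) ((htr.const_mul t).div_const c), integral_mul_const,
            integral_div, integral_const_mul]
  · rw [integral_undef hint]
    have := setIntegral_re_trace_nonneg (μ := μ) hs hQ
    have := setIntegral_nonneg (μ := μ) hs fun x _ => Nat.cast_nonneg (α := ℝ) (r x)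
    positivity

end MeasureTheory

/-- rate integral upper bound
    ∫_ℬ log det(I + Q(f)/N₀) df ≤ ∑_{m=1}^M B_m log(1 + P/(N₀ ∑ B_i)),
    where B_m = μ{f ∈ ℬ : r_Q(f) ≥ m} and P = ∫_ℬ tr Q(f) df. -/
theorem stmt6 (M : ℕ) (N₀ : ℝ) (hN₀ : 0 < N₀)
    (ℬ : Set ℝ) (hℬ : MeasurableSet ℬ) (hℬfin : volume ℬ < ⊤)
    (Q : ℝ → Matrix (Fin M) (Fin M) ℂ) (hQ : ∀ f, (Q f).PosSemidef)
    (rQ : ℝ → ℕ) (hrQ_meas : Measurable rQ) (hrQ_le : ∀ f, rQ f ≤ M)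
    (hrank : ∀ f ∈ ℬ, (Q f).rank ≤ rQ f)
    (htr_int : IntegrableOn (fun f => ((Q f).trace).re) ℬ)
    (B : ℕ → ℝ) (hB : ∀ m, B m = (volume {f ∈ ℬ | m ≤ rQ f}).toReal)
    (P : ℝ) (hP : P = ∫ f in ℬ, ((Q f).trace).re) :
    (∫ f in ℬ, Real.log ((((1 : Matrix (Fin M) (Fin M) ℂ) + (N₀⁻¹ : ℂ) • Q f).det).re)) ≤
      ∑ m ∈ Finset.Icc 1 M, B m * Real.log (1 + P / (N₀ * ∑ i ∈ Finset.Icc 1 M, B i)) := by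
  set S := ∑ i ∈ Finset.Icc 1 M, B i
  set c := 1 + P / (N₀ * S) with hc_def
  have hrQ_int : IntegrableOn (fun f => (rQ f : ℝ)) ℬ :=
    IntegrableOn.natCast_of_bounded hrQ_meas hrQ_le hℬfin
  have hS : ∫ f in ℬ, (rQ f : ℝ) = S := by
    rw [setIntegral_natCast_eq_sum_measure_setOf_le hrQ_meas hrQ_le hℬfin]
    simp only [hB, S]
  have hS_nonneg : 0 ≤ S := hS ▸ setIntegral_nonneg hℬ fun f _ => Nat.cast_nonneg _
  have hc : 1 ≤ c := by
    have hP_nonneg : 0 ≤ P := hP ▸ setIntegral_re_trace_nonneg hℬ fun f _ => hQ f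
    exact le_add_of_nonneg_right (by positivity)
  have hPS : P = N₀ * S * (c - 1) := by
    rcases hS_nonneg.eq_or_lt with hS0 | hS0
    -- here `c = 1` through the junk value `P / 0 = 0`, and `P = 0` because `Q = 0` a.e. on `ℬ`
    · rw [← hS0, mul_zero, zero_mul, hP]
      exact setIntegral_re_trace_eq_zero_of_setIntegral_rank_bound_eq_zero hℬ hrank hrQ_int
        (hS.trans hS0.symm)
    · rw [hc_def]
      field_simp
      ring
  have hbound := setIntegral_log_re_det_one_add_smul_le hℬ (fun f _ => hQ f) hrank hrQ_int htr_int
    (inv_nonneg.mpr hN₀.le) (zero_lt_one.trans_le hc)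
  simp only [RCLike.ofReal_inv, RCLike.re_to_complex, hS, ← hP] at hbound
  rw [← Finset.sum_mul]
  calc _ ≤ S * (Real.log c + c⁻¹ - 1) + N₀⁻¹ * P / c := hbound
    _ = S * Real.log c := by
        rw [hPS]
        field_simp
        ring
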